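/- arXiv:1403.1132 — 4 statements merged into one kernel-verified Lean document; each statement's English description precedes it below -/
import Mathlib

section
/- Let λ ∈ ℂ \ {0} with Re(λ) ≥ 0, ξ ∈ ℝ, and choose the square root √(-λ) with positive imaginary part. Let μ₁, μ₂ be the square roots with positive real part of ξ² + √(-λ) and ξ² - √(-λ) respectively. If Im(λ) ≥ 0, then Re(μ₁ - μ₂) ≤ 0 and Im(μ₁ - μ₂) > 0. -/
/-- Let `λ ≠ 0` with `Re λ ≥ 0`, `ξ ∈ ℝ`, `s = √(-λ)` with positive imaginary part, and
`μ₁, μ₂` the square roots with positive real part of `ξ² + s` and `ξ² - s`.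
If `Im λ ≥ 0`, then `Re(μ₁ - μ₂) ≤ 0` and `Im(μ₁ - μ₂) > 0`. -/
theorem stmt3 (l : ℂ) (ξ : ℝ) (s μ₁ μ₂ : ℂ)
    (hl0 : l ≠ 0) (hlre : 0 ≤ l.re) (hlim : 0 ≤ l.im)
    (hs : s ^ 2 = -l) (hsim : 0 < s.im)
    (hμ₁ : μ₁ ^ 2 = (ξ : ℂ) ^ 2 + s) (hμ₁re : 0 < μ₁.re)
    (hμ₂ : μ₂ ^ 2 = (ξ : ℂ) ^ 2 - s) (hμ₂re : 0 < μ₂.re) :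
    (μ₁ - μ₂).re ≤ 0 ∧ 0 < (μ₁ - μ₂).im := by
  rw [Complex.ext_iff] at hs hμ₁ hμ₂
  simp only [pow_two, Complex.mul_re, Complex.mul_im, Complex.add_re, Complex.add_im,
    Complex.sub_re, Complex.sub_im, Complex.neg_re, Complex.neg_im, Complex.ofReal_re,
    Complex.ofReal_im] at hs hμ₁ hμ₂
  obtain ⟨hs1, hs2⟩ := hs
  obtain ⟨h11, h12⟩ := hμ₁
  obtain ⟨h21, h22⟩ := hμ₂
  -- Re s ≤ 0
  have hsre : s.re ≤ 0 := by nlinarith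
  -- Im μ₁ > 0, Im μ₂ < 0
  have hy1 : 0 < μ₁.im := by nlinarith
  have hy2 : μ₂.im < 0 := by nlinarith
  constructor
  · simp only [Complex.sub_re, sub_nonpos]
    nlinarith [mul_pos hμ₁re hμ₂re, mul_pos (mul_pos hμ₁re hμ₂re) (mul_pos hμ₁re hμ₂re),
      sq_nonneg (μ₁.re * μ₂.re + μ₁.im * μ₂.im), sq_nonneg (μ₁.re - μ₂.re),
      sq_nonneg (μ₁.re + μ₂.re), mul_pos hy1 (neg_pos.mpr hy2)]
  · simp only [Complex.sub_im]
    linarith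
end

section
/- Let λ ∈ ℂ with Re(λ) ≥ 0, λ ≠ 0, Im(λ) ≥ 0, ξ ∈ ℝ, α ∈ (0,π), b > 0. With √(-λ) chosen to have positive imaginary part and μ₁, μ₂ the square roots with positive real part of ξ² + √(-λ) and ξ² - √(-λ), the equation (1/4)·sin(α)·√(-λ)·(μ₁ - μ₂) = λ + b·sin(α)·ξ² has no solution: the argument of the left-hand side lies in [π, 7π/4) while the argument of the right-hand side lies in [0, π/2]. -/
open Real

set_option maxHeartbeats 2000000

/-- With `Re λ ≥ 0`, `λ ≠ 0`, `Im λ ≥ 0`, `ξ ∈ ℝ`, `α ∈ (0,π)`, `b > 0`, `s = √(-λ)` with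
positive imaginary part and `μ₁, μ₂` the square roots with positive real part of
`ξ² ± s`, the equation `(1/4) sin α · s · (μ₁ - μ₂) = λ + b sin α ξ²` has no solution. -/
theorem stmt4 (l : ℂ) (ξ : ℝ) (α b : ℝ) (s μ₁ μ₂ : ℂ)
    (hl0 : l ≠ 0) (hlre : 0 ≤ l.re) (hlim : 0 ≤ l.im)
    (hα : α ∈ Set.Ioo 0 π) (hb : 0 < b)
    (hs : s ^ 2 = -l) (hsim : 0 < s.im)
    (hμ₁ : μ₁ ^ 2 = (ξ : ℂ) ^ 2 + s) (hμ₁re : 0 < μ₁.re)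
    (hμ₂ : μ₂ ^ 2 = (ξ : ℂ) ^ 2 - s) (hμ₂re : 0 < μ₂.re) :
    (1 / 4 : ℂ) * (Real.sin α : ℂ) * s * (μ₁ - μ₂) ≠
      l + (b : ℂ) * (Real.sin α : ℂ) * (ξ : ℂ) ^ 2 := by
  intro heq
  obtain ⟨hα1, hα2⟩ := hα
  have hsa : 0 < Real.sin α := Real.sin_pos_of_pos_of_lt_pi hα1 hα2
  set x := s.re with hx'
  set y := s.im with hy'
  set a := μ₁.re with ha'
  set b₁ := μ₁.im with hb₁'
  set c := μ₂.re with hc'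
  set d := μ₂.im with hd'
  have hs_re : x * x - y * y = -l.re := by
    have := congrArg Complex.re hs
    simpa [pow_two, Complex.mul_re] using this
  have hs_im : x * y + y * x = -l.im := by
    have := congrArg Complex.im hs
    simpa [pow_two, Complex.mul_im] using this
  have h1_re : a * a - b₁ * b₁ = ξ ^ 2 + x := by
    have := congrArg Complex.re hμ₁
    simpa [pow_two, Complex.mul_re, Complex.add_re] using this
  have h1_im : a * b₁ + b₁ * a = y := by
    have := congrArg Complex.im hμ₁
    simpa [pow_two, Complex.mul_im, Complex.add_im] using this
  have h2_re : c * c - d * d = ξ ^ 2 - x := by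
    have := congrArg Complex.re hμ₂
    simpa [pow_two, Complex.mul_re, Complex.sub_re] using this
  have h2_im : c * d + d * c = -y := by
    have := congrArg Complex.im hμ₂
    simpa [pow_two, Complex.mul_im, Complex.sub_im] using this
  -- x ≤ 0
  have hxle : x ≤ 0 := by nlinarith
  -- b₁ > 0, d < 0
  have hb₁pos : 0 < b₁ := by nlinarith
  have hdneg : d < 0 := by nlinarith
  -- a ≤ c
  have hac : a ≤ c := by nlinarith [sq_nonneg (a - c), sq_nonneg (b₁ + d), sq_nonneg (a*d + c*b₁), sq_nonneg (a*d - c*b₁), mul_pos hμ₁re hμ₂re]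
  -- components of heq
  have he_re : Real.sin α / 4 * (x * (a - c) - y * (b₁ - d)) = l.re + b * Real.sin α * (ξ * ξ) := by
    have h := congrArg Complex.re heq
    simp [Complex.mul_re, Complex.mul_im, Complex.sub_re, Complex.sub_im, Complex.add_re,
      Complex.ofReal_re, Complex.ofReal_im, pow_two, Complex.sin_ofReal_re] at h
    linarith [h]
  have he_im : Real.sin α / 4 * (x * (b₁ - d) + y * (a - c)) = l.im := by
    have h := congrArg Complex.im heq
    simp [Complex.mul_re, Complex.mul_im, Complex.sub_re, Complex.sub_im, Complex.add_im,
      Complex.ofReal_re, Complex.ofReal_im, pow_two, Complex.sin_ofReal_re] at h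
    linarith [h]
  -- Im LHS ≤ 0, so forces x = 0 and a = c
  have h1 : x * (b₁ - d) ≤ 0 := mul_nonpos_of_nonpos_of_nonneg hxle (by linarith)
  have h2 : y * (a - c) ≤ 0 := mul_nonpos_of_nonneg_of_nonpos (le_of_lt hsim) (by linarith)
  have hsum : x * (b₁ - d) + y * (a - c) = 0 := by
    rcases lt_or_eq_of_le (add_nonpos h1 h2) with h | h
    · exfalso
      have : Real.sin α / 4 * (x * (b₁ - d) + y * (a - c)) < 0 :=
        mul_neg_of_pos_of_neg (by linarith) h
      linarith
    · exact h
  have hx0 : x * (b₁ - d) = 0 := by linarith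
  have hyac : y * (a - c) = 0 := by linarith
  have hxz : x = 0 := by
    rcases mul_eq_zero.mp hx0 with h | h
    · exact h
    · linarith
  have hacz : a = c := by
    rcases mul_eq_zero.mp hyac with h | h
    · linarith
    · linarith
  -- Re equation gives contradiction
  have : Real.sin α / 4 * (x * (a - c) - y * (b₁ - d)) < 0 := by
    rw [hxz, hacz]
    have : 0 < y * (b₁ - d) := mul_pos hsim (by linarith)
    nlinarith
  nlinarith [mul_nonneg (mul_pos hb hsa).le (mul_self_nonneg ξ)]
end

section
/- Let λ ∈ ℂ with Re(λ) ≥ 0, ξ ∈ ℝ with |ξ| + |λ| ≠ 0, α ∈ (0,π), b > 0. Suppose v ∈ C₀(ℝ₊;ℂ) solves λv + ξ²v - v'' = 0 on (0,∞) and σ ∈ ℂ satisfies -sin(α)² v'(0) + (λ + b sin(α) ξ²)σ = 0 and v(0) = σ. Then (v, σ) = (0, 0). -/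
/-!
With `μ² = λ + ξ²` and `Re μ > 0`, the equation reads `v'' = μ² v`. Then `u = v' - μ v` solves
`u' = -μ u`, so `u = u₀ e^{-μ y}`, and `w = v + u₀ / (2μ) e^{-μ y}` solves `w' = μ w`, so
`w = w₀ e^{μ y}`; since `w` decays, `w₀ = 0`. Hence `v = v(0) e^{-μ y}` and `v'(0) = -μ v(0)`.
The boundary condition becomes `(sin² α μ + λ + b sin α ξ²) σ = 0`, and the bracket has positive
real part.
-/

open Real Filter Topology Set

theorem Complex.exists_sq_eq_and_re_pos {c : ℂ} (hre : 0 ≤ c.re) (hc : c ≠ 0) :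
    ∃ μ : ℂ, μ ^ 2 = c ∧ 0 < μ.re := by
  obtain ⟨μ, hμ⟩ := IsAlgClosed.exists_pow_nat_eq c two_pos
  have hμre : μ.re ≠ 0 := by
    intro h
    have hc_re : c.re = -μ.im ^ 2 := by rw [← hμ]; simp [sq, h]
    have him : μ.im = 0 := by nlinarith [sq_nonneg μ.im]
    have hμ0 : μ = 0 := Complex.ext h him
    exact hc (by rw [← hμ, hμ0]; simp)
  rcases hμre.lt_or_gt with hneg | hpos
  · exact ⟨-μ, by rw [neg_sq, hμ], by simpa using hneg⟩
  · exact ⟨μ, hμ, hpos⟩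

theorem Complex.add_ofReal_sq_ne_zero {l : ℂ} {ξ : ℝ} (hl : 0 ≤ l.re) (hne : |ξ| + ‖l‖ ≠ 0) :
    l + (ξ : ℂ) ^ 2 ≠ 0 := by
  intro h
  have hre : l.re + ξ ^ 2 = 0 := by simpa [← Complex.ofReal_pow] using congrArg Complex.re h
  have hξ : ξ = 0 := by nlinarith [sq_nonneg ξ]
  have hl0 : l = 0 := by simpa [hξ] using h
  simp [hξ, hl0] at hne

theorem tendsto_cexp_mul_ofReal_atTop {a : ℂ} (ha : a.re < 0) :
    Tendsto (fun y : ℝ => Complex.exp (a * y)) atTop (𝓝 0) := by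
  simpa [Complex.tendsto_exp_nhds_zero_iff] using tendsto_const_nhds.neg_mul_atTop ha tendsto_id

theorem hasDerivAt_cexp_mul_ofReal (a : ℂ) (x : ℝ) :
    HasDerivAt (fun y : ℝ => Complex.exp (a * y)) (a * Complex.exp (a * x)) x := by
  simpa [mul_comm] using (((hasDerivAt_id x).ofReal_comp).const_mul a).cexp

theorem eq_cexp_mul_of_hasDerivAt {f : ℝ → ℂ} {a : ℂ}
    (hf : ∀ x, 0 ≤ x → HasDerivAt f (a * f x) x) :
    ∀ y, 0 ≤ y → f y = Complex.exp (a * y) * f 0 := by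
  set g : ℝ → ℂ := fun y => Complex.exp (-a * y) * f y
  have hg : ∀ x, 0 ≤ x → HasDerivAt g 0 x := fun x hx =>
    ((hasDerivAt_cexp_mul_ofReal (-a) x).mul (hf x hx)).congr_deriv (by ring)
  intro y hy
  have hconst : g y = g 0 :=
    constant_of_has_deriv_right_zero (fun x hx => (hg x hx.1).continuousAt.continuousWithinAt)
      (fun x hx => (hg x hx.1).hasDerivWithinAt) y ⟨hy, le_rfl⟩
  have hexp : Complex.exp (a * y) * Complex.exp (-a * y) = 1 := by
    rw [← Complex.exp_add]; simp
  simp only [g, Complex.ofReal_zero, mul_zero, Complex.exp_zero, one_mul] at hconst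
  rw [← hconst, ← mul_assoc, hexp, one_mul]

theorem eq_zero_of_eq_cexp_mul_of_tendsto_zero {f : ℝ → ℂ} {a : ℂ} (ha : 0 < a.re)
    (hf : ∀ y, 0 ≤ y → f y = Complex.exp (a * y) * f 0) (hdecay : Tendsto f atTop (𝓝 0)) :
    f 0 = 0 := by
  have hlim : Tendsto (fun y : ℝ => Complex.exp (-a * y) * f y) atTop (𝓝 0) := by
    simpa using (tendsto_cexp_mul_ofReal_atTop (a := -a) (by simpa using ha)).mul hdecay
  refine tendsto_nhds_unique (tendsto_const_nhds.congr' ?_) hlim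
  filter_upwards [eventually_ge_atTop 0] with y hy
  rw [hf y hy, ← mul_assoc, ← Complex.exp_add]
  simp

theorem eq_cexp_neg_mul_of_hasDerivAt_of_tendsto_zero {μ : ℂ} (hμ : 0 < μ.re) {v v' : ℝ → ℂ}
    (hv : ∀ x, 0 ≤ x → HasDerivAt v (v' x) x)
    (hv' : ∀ x, 0 ≤ x → HasDerivAt v' (μ ^ 2 * v x) x)
    (hdecay : Tendsto v atTop (𝓝 0)) :
    v' 0 = -μ * v 0 ∧ ∀ y, 0 ≤ y → v y = Complex.exp (-μ * y) * v 0 := by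
  have hμ0 : μ ≠ 0 := by rintro rfl; simp at hμ
  set u₀ := v' 0 - μ * v 0
  have hu : ∀ y, 0 ≤ y → v' y - μ * v y = Complex.exp (-μ * y) * u₀ := by
    refine eq_cexp_mul_of_hasDerivAt (f := fun y => v' y - μ * v y) fun x hx => ?_
    exact ((hv' x hx).sub ((hv x hx).const_mul μ)).congr_deriv (by ring)
  set w : ℝ → ℂ := fun y => v y + u₀ / (2 * μ) * Complex.exp (-μ * y)
  have hw : ∀ y, 0 ≤ y → w y = Complex.exp (μ * y) * w 0 := by
    refine eq_cexp_mul_of_hasDerivAt fun x hx => ?_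
    refine ((hv x hx).add ((hasDerivAt_cexp_mul_ofReal (-μ) x).const_mul
      (u₀ / (2 * μ)))).congr_deriv ?_
    have hhalf : u₀ / (2 * μ) * μ = u₀ / 2 := by field_simp
    linear_combination hu x hx - 2 * Complex.exp (-μ * x) * hhalf
  have hw0 : w 0 = 0 := by
    refine eq_zero_of_eq_cexp_mul_of_tendsto_zero hμ hw ?_
    simpa [w] using hdecay.add
      (tendsto_const_nhds.mul (tendsto_cexp_mul_ofReal_atTop (a := -μ) (by simpa using hμ)))
  have hv0 : v 0 = -(u₀ / (2 * μ)) := by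
    simpa [w, eq_neg_iff_add_eq_zero] using hw0
  refine ⟨?_, fun y hy => ?_⟩
  · have hu₀ : u₀ = -2 * μ * v 0 := by rw [hv0]; field_simp
    linear_combination hu₀
  · have hwy : w y = 0 := by rw [hw y hy, hw0, mul_zero]
    simp only [w] at hwy
    linear_combination hwy - Complex.exp (-μ * y) * hv0

theorem eqOn_Ici_of_deriv_deriv_eq_of_pos {v : ℝ → ℂ} {c : ℂ} (hv : ContDiff ℝ 2 v)
    (h : ∀ y, 0 < y → deriv (deriv v) y = c * v y) :
    EqOn (deriv (deriv v)) (fun y => c * v y) (Ici 0) := by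
  rw [← closure_Ioi]
  exact EqOn.closure h ((contDiff_succ_iff_deriv.mp hv).2.2.continuous_deriv le_rfl)
    (continuous_const.mul hv.continuous)

theorem Complex.ofReal_mul_add_add_ofReal_ne_zero {s r : ℝ} {μ l : ℂ} (hs : 0 < s) (hr : 0 ≤ r)
    (hμ : 0 < μ.re) (hl : 0 ≤ l.re) : (s : ℂ) * μ + (l + r) ≠ 0 := by
  have hre : 0 < ((s : ℂ) * μ + (l + r)).re := by
    rw [Complex.add_re, Complex.add_re, Complex.re_ofReal_mul, Complex.ofReal_re]
    exact add_pos_of_pos_of_nonneg (mul_pos hs hμ) (add_nonneg hl hr)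
  exact fun h => hre.ne' (by rw [h, Complex.zero_re])

/-- A decaying solution of `λ v + ξ² v - v'' = 0` on `(0,∞)` with the dynamic boundary
condition `-sin(α)² v'(0) + (λ + b sin α ξ²) σ = 0` and `v(0) = σ` is trivial. -/
theorem stmt8 (l : ℂ) (ξ : ℝ) (α b : ℝ) (σ : ℂ) (v : ℝ → ℂ)
    (hlre : 0 ≤ l.re) (hne : |ξ| + ‖l‖ ≠ 0)
    (hα : α ∈ Set.Ioo 0 π) (hb : 0 < b)
    (hsmooth : ContDiff ℝ 2 v)
    (hdecay : Filter.Tendsto v Filter.atTop (nhds 0))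
    (hode : ∀ y : ℝ, 0 < y →
      l * v y + (ξ : ℂ) ^ 2 * v y - deriv^[2] v y = 0)
    (hbc : -((Real.sin α : ℂ) ^ 2) * deriv v 0
        + (l + (b : ℂ) * (Real.sin α : ℂ) * (ξ : ℂ) ^ 2) * σ = 0)
    (hv0 : v 0 = σ) :
    (∀ y : ℝ, 0 ≤ y → v y = 0) ∧ σ = 0 := by
  have hsin : 0 < Real.sin α := Real.sin_pos_of_pos_of_lt_pi hα.1 hα.2
  obtain ⟨μ, hμsq, hμre⟩ := Complex.exists_sq_eq_and_re_pos (c := l + (ξ : ℂ) ^ 2)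
    (by simpa [← Complex.ofReal_pow] using add_nonneg hlre (sq_nonneg ξ))
    (Complex.add_ofReal_sq_ne_zero hlre hne)
  have hv' : ContDiff ℝ 1 (deriv v) := (contDiff_succ_iff_deriv.mp hsmooth).2.2
  have hode₀ := eqOn_Ici_of_deriv_deriv_eq_of_pos (c := μ ^ 2) hsmooth fun y hy => by
    have hy' : l * v y + ξ ^ 2 * v y - deriv (deriv v) y = 0 := hode y hy
    linear_combination -hy' - v y * hμsq
  obtain ⟨hvd0, hvexp⟩ := eq_cexp_neg_mul_of_hasDerivAt_of_tendsto_zero hμre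
    (fun x _ => (hsmooth.differentiable two_ne_zero x).hasDerivAt)
    (fun x hx => (hv'.differentiable one_ne_zero x).hasDerivAt.congr_deriv (hode₀ hx)) hdecay
  have hsymbol := Complex.ofReal_mul_add_add_ofReal_ne_zero (pow_pos hsin 2)
    (mul_nonneg (mul_nonneg hb.le hsin.le) (sq_nonneg ξ)) hμre hlre
  simp only [Complex.ofReal_mul, Complex.ofReal_pow] at hsymbol
  have hσ : σ = 0 := by
    refine (mul_eq_zero.mp ?_).resolve_left hsymbol
    rw [hv0] at hvd0
    linear_combination hbc + (Real.sin α : ℂ) ^ 2 * hvd0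
  exact ⟨fun y hy => by rw [hvexp y hy, hv0, hσ, mul_zero], hσ⟩
end

section
/- Let λ ∈ ℂ with Re(λ) ≥ 0, and consider v ∈ C₀(ℝ₊;ℂ) solving v - 2v'' + v'''' = 0 on (0,∞), σ ∈ ℂ with the boundary conditions -½sin(α)(v'(0) - v'''(0)) + λσ + b sin(α)σ = 0, -v(0) + v''(0) = 0, and v(0) = σ, where α ∈ (0,π), b > 0. Then (v, σ) = (0, 0). -/
/-!
The vector `(v, v', v'', v''')` solves a linear first-order system, so by ODE uniqueness on
`[0, ∞)` it coincides with the jet of `(p + q y) e^{-y} + (r + s y) e^{y}` for the coefficients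
matching its initial value. Decay forces `r = s = 0`. The condition `v''(0) = v(0)` then gives
`q = 0`, hence `v'(0) = v'''(0)`, and the remaining condition reads `(λ + b sin α) σ = 0`; as
`Re (λ + b sin α) > 0`, `σ = 0`, so the jet vanishes at `0` and `v = 0`.
-/

open Real Filter Topology Set Complex

theorem eqOn_Ici_of_hasDerivAt {E : Type*} [NormedAddCommGroup E] [NormedSpace ℝ E]
    {F : E → E} {K : NNReal} (hF : LipschitzWith K F) {f g : ℝ → E} {a : ℝ}
    (hf : ∀ t, a ≤ t → HasDerivAt f (F (f t)) t) (hg : ∀ t, a ≤ t → HasDerivAt g (F (g t)) t)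
    (ha : f a = g a) : EqOn f g (Ici a) := fun _ ht =>
  ODE_solution_unique (fun _ => hF) (HasDerivAt.continuousOn fun s hs => hf s hs.1)
    (fun s hs => (hf s hs.1).hasDerivWithinAt) (HasDerivAt.continuousOn fun s hs => hg s hs.1)
    (fun s hs => (hg s hs.1).hasDerivWithinAt) ha ⟨ht, le_rfl⟩

theorem hasDerivAt_iterate_deriv {F : Type*} [NormedAddCommGroup F] [NormedSpace ℝ F]
    {v : ℝ → F} {n k : ℕ} (hv : ContDiff ℝ n v) (hk : k < n) (t : ℝ) :
    HasDerivAt (deriv^[k] v) (deriv^[k + 1] v t) t := by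
  have hd : ContDiff ℝ 1 (deriv^[k] v) := .iterate_deriv' 1 k (hv.of_le (by norm_cast; omega))
  rw [Function.iterate_succ_apply']
  exact (hd.differentiable one_ne_zero t).hasDerivAt

theorem tendsto_affine_mul_cexp_neg (p q : ℂ) :
    Tendsto (fun y : ℝ => (p + q * y) * cexp (-y)) atTop (𝓝 0) := by
  have hexp := Real.tendsto_exp_neg_atTop_nhds_zero.ofReal
  have hmul := (tendsto_pow_mul_exp_neg_atTop_nhds_zero 1).ofReal
  rw [ofReal_zero] at hexp hmul
  have h := (hexp.const_mul p).add (hmul.const_mul q)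
  rw [mul_zero, mul_zero, zero_add] at h
  refine h.congr fun y => ?_
  push_cast
  ring

theorem eq_zero_of_tendsto_affine {r s : ℂ} (h : Tendsto (fun y : ℝ => r + s * y) atTop (𝓝 0)) :
    r = 0 ∧ s = 0 := by
  have hs : s = 0 := by
    have hshift := (h.comp (tendsto_atTop_add_const_right _ 1 tendsto_id)).sub h
    rw [sub_zero] at hshift
    refine tendsto_nhds_unique tendsto_const_nhds (hshift.congr fun y => ?_)
    simp only [Function.comp_apply, id, ofReal_add, ofReal_one]
    ring
  subst hs
  exact ⟨by simpa using h, rfl⟩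

noncomputable section

namespace FourthOrderODE

def jet (v : ℝ → ℂ) (y : ℝ) : ℂ × ℂ × ℂ × ℂ := (v y, deriv v y, deriv^[2] v y, deriv^[3] v y)

def companion : (ℂ × ℂ × ℂ × ℂ) →L[ℂ] (ℂ × ℂ × ℂ × ℂ) :=
  LinearMap.toContinuousLinearMap
    { toFun := fun x => (x.2.1, x.2.2.1, x.2.2.2, 2 * x.2.2.1 - x.1)
      map_add' := fun x y => by simp only [Prod.fst_add, Prod.snd_add, Prod.mk_add_mk]; ring_nf
      map_smul' := fun c x => by
        simp only [Prod.smul_fst, Prod.smul_snd, Prod.smul_mk, smul_eq_mul, RingHom.id_apply]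
        ring_nf }

@[simp]
theorem companion_apply (x : ℂ × ℂ × ℂ × ℂ) :
    companion x = (x.2.1, x.2.2.1, x.2.2.2, 2 * x.2.2.1 - x.1) := rfl

theorem hasDerivAt_jet {v : ℝ → ℂ} (hv : ContDiff ℝ 4 v)
    (hode : ∀ y, 0 < y → v y - 2 * deriv^[2] v y + deriv^[4] v y = 0) {t : ℝ} (ht : 0 ≤ t) :
    HasDerivAt (jet v) (companion (jet v t)) t := by
  have hcont (k : ℕ) (hk : k ≤ 4) : Continuous (deriv^[k] v) :=
    (ContDiff.iterate_deriv' 0 k (hv.of_le (by norm_cast; omega))).continuous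
  have hode' : EqOn (fun y => v y - 2 * deriv^[2] v y + deriv^[4] v y) 0 (Ici 0) :=
    EqOn.of_subset_closure (fun y (hy : y ∈ Ioi 0) => hode y hy)
      ((hcont 0 (by norm_num)).sub (continuous_const.mul (hcont 2 (by norm_num))) |>.add
        (hcont 4 le_rfl)).continuousOn
      continuousOn_const Ioi_subset_Ici_self (closure_Ioi 0).superset
  have hode_t : v t - 2 * deriv^[2] v t + deriv^[4] v t = 0 := hode' (mem_Ici.2 ht)
  have h4 : deriv^[4] v t = 2 * deriv^[2] v t - v t := by linear_combination hode_t
  rw [companion_apply, jet, ← h4]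
  exact (hasDerivAt_iterate_deriv hv (k := 0) (by norm_num) t).prodMk <|
    (hasDerivAt_iterate_deriv hv (k := 1) (by norm_num) t).prodMk <|
    (hasDerivAt_iterate_deriv hv (k := 2) (by norm_num) t).prodMk
    (hasDerivAt_iterate_deriv hv (k := 3) (by norm_num) t)

/-- The general solution of `v - 2 v'' + v'''' = 0`: the characteristic polynomial `(μ² - 1)²`
has the double roots `±1`. -/
def expPoly (p q r s : ℂ) (y : ℝ) : ℂ := (p + q * y) * cexp (-y) + (r + s * y) * cexp y

theorem hasDerivAt_expPoly (p q r s : ℂ) (y : ℝ) :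
    HasDerivAt (expPoly p q r s) (expPoly (q - p) (-q) (r + s) s y) y := by
  have hid : HasDerivAt (fun t : ℝ => (t : ℂ)) 1 y := ofRealCLM.hasDerivAt
  have hneg := ((hid.const_mul q).const_add p).mul ((Complex.hasDerivAt_exp _).comp y hid.neg)
  have hpos := ((hid.const_mul s).const_add r).mul ((Complex.hasDerivAt_exp _).comp y hid)
  refine (hneg.add hpos).congr_deriv ?_
  simp only [expPoly, Function.comp_apply, Pi.neg_apply]
  ring

def expJet (p q r s : ℂ) (y : ℝ) : ℂ × ℂ × ℂ × ℂ :=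
  (expPoly p q r s y, expPoly (q - p) (-q) (r + s) s y, expPoly (p - 2 * q) q (r + 2 * s) s y,
    expPoly (3 * q - p) (-q) (r + 3 * s) s y)

theorem hasDerivAt_expJet (p q r s : ℂ) (y : ℝ) :
    HasDerivAt (expJet p q r s) (companion (expJet p q r s y)) y := by
  have h (p' q' r' s' : ℂ) := hasDerivAt_expPoly p' q' r' s' y
  refine (h p q r s).prodMk <| (h _ _ _ _).congr_deriv ?_ |>.prodMk <|
    (h _ _ _ _).congr_deriv ?_ |>.prodMk <| (h _ _ _ _).congr_deriv ?_
  all_goals simp only [expJet, expPoly]; ring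

theorem expJet_zero (p q r s : ℂ) :
    expJet p q r s 0 = (p + r, q - p + r + s, p - 2 * q + r + 2 * s, 3 * q - p + r + 3 * s) := by
  simp [expJet, expPoly, add_assoc]

theorem exists_expJet_zero_eq (a : ℂ × ℂ × ℂ × ℂ) : ∃ p q r s, expJet p q r s 0 = a := by
  obtain ⟨a₀, a₁, a₂, a₃⟩ := a
  refine ⟨(2 * a₀ - 3 * a₁ + a₃) / 4, (a₃ - a₁ - a₂ + a₀) / 4, (2 * a₀ + 3 * a₁ - a₃) / 4,
    (a₃ - a₁ + a₂ - a₀) / 4, ?_⟩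
  simp only [expJet_zero, Prod.mk.injEq]
  refine ⟨?_, ?_, ?_, ?_⟩ <;> ring

theorem exists_eqOn_jet_expJet {v : ℝ → ℂ} (hv : ContDiff ℝ 4 v)
    (hode : ∀ y, 0 < y → v y - 2 * deriv^[2] v y + deriv^[4] v y = 0) :
    ∃ p q r s, EqOn (jet v) (expJet p q r s) (Ici 0) := by
  obtain ⟨p, q, r, s, h0⟩ := exists_expJet_zero_eq (jet v 0)
  exact ⟨p, q, r, s, eqOn_Ici_of_hasDerivAt companion.lipschitz
    (fun _ ht => hasDerivAt_jet hv hode ht) (fun t _ => hasDerivAt_expJet p q r s t) h0.symm⟩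

theorem eq_zero_of_tendsto_expPoly {p q r s : ℂ} (h : Tendsto (expPoly p q r s) atTop (𝓝 0)) :
    r = 0 ∧ s = 0 := by
  -- `expPoly p q r s y * e^{-y} = r + s y + o(1)`
  refine eq_zero_of_tendsto_affine ?_
  have hlim := (h.mul (tendsto_affine_mul_cexp_neg 1 0)).sub
    ((tendsto_affine_mul_cexp_neg p q).mul (tendsto_affine_mul_cexp_neg 1 0))
  rw [mul_zero, sub_zero] at hlim
  refine hlim.congr fun y => ?_
  have hexp : cexp y * cexp (-y) = 1 := by rw [← Complex.exp_add, add_neg_cancel, Complex.exp_zero]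
  simp only [expPoly]
  linear_combination (r + s * y) * hexp

theorem exists_eqOn_jet_expJet_of_tendsto {v : ℝ → ℂ} (hv : ContDiff ℝ 4 v)
    (hdecay : Tendsto v atTop (𝓝 0))
    (hode : ∀ y, 0 < y → v y - 2 * deriv^[2] v y + deriv^[4] v y = 0) :
    ∃ p q, EqOn (jet v) (expJet p q 0 0) (Ici 0) := by
  obtain ⟨p, q, r, s, hv⟩ := exists_eqOn_jet_expJet hv hode
  obtain ⟨rfl, rfl⟩ : r = 0 ∧ s = 0 := by
    refine eq_zero_of_tendsto_expPoly (p := p) (q := q) (hdecay.congr' ?_)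
    filter_upwards [eventually_ge_atTop 0] with y hy
    exact congrArg Prod.fst (hv hy)
  exact ⟨p, q, hv⟩

end FourthOrderODE

end

open FourthOrderODE in
/-- A decaying solution of `v - 2 v'' + v'''' = 0` on `(0,∞)` with boundary conditions
`-½ sin α (v'(0) - v'''(0)) + λσ + b sin α σ = 0`, `-v(0) + v''(0) = 0`, `v(0) = σ`,
where `Re λ ≥ 0`, `α ∈ (0,π)`, `b > 0`, is trivial. -/
theorem stmt16 (l : ℂ) (α b : ℝ) (σ : ℂ) (v : ℝ → ℂ)
    (hlre : 0 ≤ l.re) (hα : α ∈ Set.Ioo 0 π) (hb : 0 < b)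
    (hsmooth : ContDiff ℝ 4 v)
    (hdecay : Filter.Tendsto v Filter.atTop (nhds 0))
    (hode : ∀ y : ℝ, 0 < y →
      v y - 2 * deriv^[2] v y + deriv^[4] v y = 0)
    (hbc0 : -(1 / 2 : ℂ) * (Real.sin α : ℂ) * (deriv v 0 - deriv^[3] v 0)
        + l * σ + (b : ℂ) * (Real.sin α : ℂ) * σ = 0)
    (hbc1 : -v 0 + deriv^[2] v 0 = 0)
    (hbc2 : v 0 = σ) :
    (∀ y : ℝ, 0 ≤ y → v y = 0) ∧ σ = 0 := by
  obtain ⟨p, q, hjet⟩ := exists_eqOn_jet_expJet_of_tendsto hsmooth hdecay hode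
  obtain ⟨hv₀, hv₁, hv₂, hv₃⟩ : v 0 = p ∧ deriv v 0 = q - p ∧ deriv^[2] v 0 = p - 2 * q ∧
      deriv^[3] v 0 = 3 * q - p := by
    simpa [jet, expJet_zero] using hjet (self_mem_Ici : (0 : ℝ) ∈ Ici 0)
  have hq : q = 0 := by linear_combination (-1 / 2 : ℂ) * (hbc1 + hv₀ - hv₂)
  have hne : l + b * Real.sin α ≠ 0 := fun h => by
    have hre := congrArg Complex.re h
    simp only [add_re, mul_re, ofReal_re, ofReal_im, mul_zero, sub_zero, zero_re] at hre
    nlinarith [mul_pos hb (sin_pos_of_pos_of_lt_pi hα.1 hα.2)]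
  have hσ : σ = 0 := by
    refine (mul_eq_zero.1 ?_).resolve_left hne
    linear_combination hbc0 + (Real.sin α / 2 : ℂ) * (hv₁ - hv₃) - Real.sin α * hq
  have hp : p = 0 := by rw [← hv₀, hbc2, hσ]
  refine ⟨fun y hy => ?_, hσ⟩
  simpa [jet, expJet, expPoly, hp, hq] using congrArg Prod.fst (hjet hy)
end
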